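/- Let M be a positive-integer-valued random variable and let (Y_j, X_j), j ≥ 1, be random variables with E[f(X_j) ε_j | M = m] possibly nonzero for ε_j = Y_j − μ(X_j). If Z given M = m is uniform on {1,...,m} and conditionally independent of the data given M, then E[f(X_Z) ε_Z] = E[(1/M) ∑_{j=1}^M f(X_j) ε_j], whereas the GEE-type sum satisfies E[∑_{j=1}^M f(X_j) ε_j] = E[M · E[(1/M)∑_{j=1}^M f(X_j)ε_j | M]]. In particular, if E[f(X_j) ε_j | M] = c(M) (the same for all j ≤ M), then the WCR score has mean E[c(M)] while the GEE score has mean E[M·c(M)]. -/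

import Mathlib

/-!
Both scores are computed by splitting `Ω` along the finitely many values of the cluster size `M`
(for the WCR score, of the pair `(M, Z)`). On `{M = m}` the uniform choice of `Z` turns each
`g j` into `g j / m`, so the WCR score averages over the cluster, while the GEE score adds up all
`m` observations; under a constant conditional mean `c m` the latter contributes
`m * c m * P(M = m)` instead of `c m * P(M = m)`.
-/

open MeasureTheory

section Fibers

variable {Ω α E : Type*} [MeasurableSpace Ω] [MeasurableSpace α] [MeasurableSingletonClass α]
  [NormedAddCommGroup E] [NormedSpace ℝ E] {μ : Measure Ω} {W : Ω → α} {s : Finset α}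

theorem integral_eq_sum_setIntegral_fiber (hW : Measurable W) (hWs : ∀ᵐ ω ∂μ, W ω ∈ s)
    {H : α → Ω → E} (hH : ∀ a ∈ s, IntegrableOn (H a) {ω | W ω = a} μ) :
    ∫ ω, H (W ω) ω ∂μ = ∑ a ∈ s, ∫ ω in {ω | W ω = a}, H a ω ∂μ := by
  have hfiber (a : α) : MeasurableSet {ω | W ω = a} := hW (measurableSet_singleton a)
  calc ∫ ω, H (W ω) ω ∂μ = ∫ ω, ∑ a ∈ s, {ω | W ω = a}.indicator (H a) ω ∂μ := by
        refine integral_congr_ae (hWs.mono fun ω hω => ?_)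
        dsimp only
        rw [Finset.sum_eq_single_of_mem (W ω) hω fun a _ ha =>
          Set.indicator_of_notMem (s := {ω | W ω = a}) (Ne.symm ha) _]
        exact (Set.indicator_of_mem (s := {ω' | W ω' = W ω}) rfl _).symm
    _ = ∑ a ∈ s, ∫ ω, {ω | W ω = a}.indicator (H a) ω ∂μ :=
        integral_finsetSum s fun a ha => (integrable_indicator_iff (hfiber a)).2 (hH a ha)
    _ = ∑ a ∈ s, ∫ ω in {ω | W ω = a}, H a ω ∂μ :=
        Finset.sum_congr rfl fun a _ => integral_indicator (hfiber a)

theorem integral_comp_eq_sum_measureReal_smul [CompleteSpace E] [IsFiniteMeasure μ]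
    (hW : Measurable W) (hWs : ∀ᵐ ω ∂μ, W ω ∈ s) (φ : α → E) :
    ∫ ω, φ (W ω) ∂μ = ∑ a ∈ s, μ.real {ω | W ω = a} • φ a := by
  rw [integral_eq_sum_setIntegral_fiber hW hWs (H := fun a _ => φ a)
    fun a _ => integrableOn_const]
  exact Finset.sum_congr rfl fun a _ => setIntegral_const (φ a)

end Fibers

section Clusters

variable {Ω : Type*} [MeasurableSpace Ω] {μ : Measure Ω} {M Z : Ω → ℕ} {s : Finset ℕ}
  {t : ℕ → Finset ℕ} {g : ℕ → Ω → ℝ}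

theorem integral_weighted_fiber_sum (hM : Measurable M) (hMs : ∀ ω, M ω ∈ s)
    (hg : ∀ j, Integrable (g j) μ) (w : ℕ → ℝ) :
    ∫ ω, w (M ω) * ∑ j ∈ t (M ω), g j ω ∂μ
      = ∑ m ∈ s, w m * ∑ j ∈ t m, ∫ ω in {ω | M ω = m}, g j ω ∂μ := by
  rw [integral_eq_sum_setIntegral_fiber hM (ae_of_all _ hMs)
    (H := fun m ω => w m * ∑ j ∈ t m, g j ω)
    fun m _ => ((integrable_finsetSum _ fun j _ => hg j).const_mul _).integrableOn]
  refine Finset.sum_congr rfl fun m _ => ?_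
  rw [integral_const_mul, integral_finsetSum _ fun j _ => (hg j).integrableOn]

theorem integral_eval_index_eq_sum_setIntegral (hM : Measurable M) (hZ : Measurable Z) (hMs : ∀ ω, M ω ∈ s)
    (hZt : ∀ ω, Z ω ∈ t (M ω)) (hg : ∀ j, Integrable (g j) μ) :
    ∫ ω, g (Z ω) ω ∂μ = ∑ m ∈ s, ∑ j ∈ t m, ∫ ω in {ω | M ω = m ∧ Z ω = j}, g j ω ∂μ := by
  set r := s.biUnion fun m => (t m).image (Prod.mk m)
  have hr (p : ℕ × ℕ) : p ∈ r ↔ p.1 ∈ s ∧ p.2 ∈ t p.1 := by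
    obtain ⟨m, j⟩ := p
    simp [r]
  have hMZr : ∀ ω, (M ω, Z ω) ∈ r := fun ω => (hr _).2 ⟨hMs ω, hZt ω⟩
  refine (integral_eq_sum_setIntegral_fiber (hM.prodMk hZ) (ae_of_all μ hMZr)
    (H := fun p ω => g p.2 ω) fun p _ => (hg p.2).integrableOn).trans ?_
  rw [← Finset.sum_finset_product' r s t hr]
  simp only [Prod.ext_iff]

end Clusters

theorem wcr_vs_gee_score_means_general
    {Ω : Type*} [MeasurableSpace Ω] (μ : Measure Ω) [IsProbabilityMeasure μ]
    (N : ℕ) (M Z : Ω → ℕ) (hMmeas : Measurable M) (hZmeas : Measurable Z)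
    (c : ℕ → ℝ)
    (g : ℕ → Ω → ℝ)
    (hgint : ∀ j, Integrable (g j) μ)
    (hMrange : ∀ ω, M ω ∈ Finset.Icc 1 N)
    (hZrange : ∀ ω, Z ω ∈ Finset.Icc 1 (M ω))
    -- `Z` given `M = m` is uniform on `{1,...,m}` and conditionally independent of the data:
    (hZcond : ∀ m ∈ Finset.Icc 1 N, ∀ j ∈ Finset.Icc 1 m,
      ∫ ω in {ω | M ω = m ∧ Z ω = j}, g j ω ∂μ
        = (1 / m : ℝ) * ∫ ω in {ω | M ω = m}, g j ω ∂μ)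
    -- `E[f(X_j) ε_j | M] = c(M)`, the same for all `j ≤ M`:
    (hc : ∀ m ∈ Finset.Icc 1 N, ∀ j ∈ Finset.Icc 1 m,
      ∫ ω in {ω | M ω = m}, g j ω ∂μ = c m * (μ {ω | M ω = m}).toReal) :
    (∫ ω, g (Z ω) ω ∂μ
        = ∫ ω, (1 / (M ω) : ℝ) * ∑ j ∈ Finset.Icc 1 (M ω), g j ω ∂μ)
    ∧ (∫ ω, (∑ j ∈ Finset.Icc 1 (M ω), g j ω) ∂μ
        = ∫ ω, (M ω : ℝ) * ((1 / (M ω) : ℝ) * ∑ j ∈ Finset.Icc 1 (M ω), c (M ω)) ∂μ)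
    ∧ (∫ ω, (1 / (M ω) : ℝ) * ∑ j ∈ Finset.Icc 1 (M ω), g j ω ∂μ = ∫ ω, c (M ω) ∂μ)
    ∧ (∫ ω, (∑ j ∈ Finset.Icc 1 (M ω), g j ω) ∂μ = ∫ ω, (M ω : ℝ) * c (M ω) ∂μ) := by
  have hM_ne_zero (ω : Ω) : (M ω : ℝ) ≠ 0 := by
    have := (Finset.mem_Icc.1 (hMrange ω)).1
    positivity
  have hgee (w : ℕ → ℝ) : ∫ ω, w (M ω) * ∑ j ∈ Finset.Icc 1 (M ω), g j ω ∂μ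
      = ∫ ω, w (M ω) * (M ω * c (M ω)) ∂μ := by
    rw [integral_weighted_fiber_sum hMmeas hMrange hgint,
      integral_comp_eq_sum_measureReal_smul hMmeas (ae_of_all μ hMrange)
        (fun m : ℕ => w m * (m * c m))]
    refine Finset.sum_congr rfl fun m hm => ?_
    rw [Finset.sum_congr rfl (hc m hm), Finset.sum_const, Nat.card_Icc, nsmul_eq_mul,
      smul_eq_mul, measureReal_def]
    push_cast
    ring
  have hgee_sum : ∫ ω, (∑ j ∈ Finset.Icc 1 (M ω), g j ω) ∂μ
      = ∫ ω, (M ω : ℝ) * c (M ω) ∂μ := by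
    simpa using hgee 1
  refine ⟨?_, ?_, ?_, hgee_sum⟩
  · rw [integral_eval_index_eq_sum_setIntegral hMmeas hZmeas hMrange hZrange hgint]
    refine Eq.trans ?_ (integral_weighted_fiber_sum (t := Finset.Icc 1) hMmeas hMrange hgint
      fun m : ℕ => 1 / (m : ℝ)).symm
    refine Finset.sum_congr rfl fun m hm => ?_
    rw [Finset.mul_sum]
    exact Finset.sum_congr rfl (hZcond m hm)
  · rw [hgee_sum]
    refine integral_congr_ae (ae_of_all μ fun ω => ?_)
    simp only [Finset.sum_const, Nat.card_Icc, add_tsub_cancel_right, nsmul_eq_mul]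
    field_simp [hM_ne_zero ω]
  · refine (hgee fun m : ℕ => 1 / (m : ℝ)).trans ?_
    refine integral_congr_ae (ae_of_all μ fun ω => ?_)
    field_simp [hM_ne_zero ω]

/-- Informative cluster size: with `g j ω = f(X_j(ω)) ε_j(ω)` the per-observation score,
`Z` uniform on `{1,...,M}` given `M` and conditionally independent of the data given `M`,
the WCR score `f(X_Z) ε_Z` has mean `E[(1/M) ∑_{j≤M} f(X_j) ε_j]`, the GEE score has mean
`E[M ⋅ E[(1/M)∑_{j≤M} f(X_j)ε_j | M]]`; in particular, if `E[f(X_j)ε_j | M] = c(M)` for all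
`j ≤ M`, the WCR score has mean `E[c(M)]` while the GEE score has mean `E[M⋅c(M)]`. -/
theorem wcr_vs_gee_score_means
    {Ω : Type*} [MeasurableSpace Ω] (μ : Measure Ω) [IsProbabilityMeasure μ]
    (N : ℕ) (M Z : Ω → ℕ) (hMmeas : Measurable M) (hZmeas : Measurable Z)
    (X Y : ℕ → Ω → ℝ) (f muF : ℝ → ℝ) (c : ℕ → ℝ)
    (g : ℕ → Ω → ℝ)
    (hg : ∀ j ω, g j ω = f (X j ω) * (Y j ω - muF (X j ω)))
    (hgmeas : ∀ j, Measurable (g j))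
    (hgint : ∀ j, Integrable (g j) μ)
    (hMrange : ∀ ω, M ω ∈ Finset.Icc 1 N)
    (hZrange : ∀ ω, Z ω ∈ Finset.Icc 1 (M ω))
    -- `Z` given `M = m` is uniform on `{1,...,m}` and conditionally independent of the data:
    (hZcond : ∀ m ∈ Finset.Icc 1 N, ∀ j ∈ Finset.Icc 1 m,
      ∫ ω in {ω | M ω = m ∧ Z ω = j}, g j ω ∂μ
        = (1 / m : ℝ) * ∫ ω in {ω | M ω = m}, g j ω ∂μ)
    -- `E[f(X_j) ε_j | M] = c(M)`, the same for all `j ≤ M`: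
    (hc : ∀ m ∈ Finset.Icc 1 N, ∀ j ∈ Finset.Icc 1 m,
      ∫ ω in {ω | M ω = m}, g j ω ∂μ = c m * (μ {ω | M ω = m}).toReal) :
    (∫ ω, g (Z ω) ω ∂μ
        = ∫ ω, (1 / (M ω) : ℝ) * ∑ j ∈ Finset.Icc 1 (M ω), g j ω ∂μ)
    ∧ (∫ ω, (∑ j ∈ Finset.Icc 1 (M ω), g j ω) ∂μ
        = ∫ ω, (M ω : ℝ) * ((1 / (M ω) : ℝ) * ∑ j ∈ Finset.Icc 1 (M ω), c (M ω)) ∂μ)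
    ∧ (∫ ω, (1 / (M ω) : ℝ) * ∑ j ∈ Finset.Icc 1 (M ω), g j ω ∂μ = ∫ ω, c (M ω) ∂μ)
    ∧ (∫ ω, (∑ j ∈ Finset.Icc 1 (M ω), g j ω) ∂μ = ∫ ω, (M ω : ℝ) * c (M ω) ∂μ) :=
  wcr_vs_gee_score_means_general μ N M Z hMmeas hZmeas c g hgint hMrange hZrange hZcond hc
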